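/- Let X be a κ-step subshift of Q^M, let A be a subset of M, and let p and p' be two patterns in X_{A^{+2κ}} such that p↾_{∂_{2κ}⁺A} = p'↾_{∂_{2κ}⁺A}. Then there are two points x and x' of X such that x↾_{A^{+2κ}} = p, x'↾_{A^{+2κ}} = p', and x↾_{M∖A} = x'↾_{M∖A}. -/

import Mathlib

open Filter Set

namespace GoE

variable {G M Q : Type*}

/-- A left homogeneous space `⟨M, G, ▷⟩` together with a coordinate system
`⟨m₀, (g_{m₀,m})_{m∈M}⟩`: a cell space with finite stabiliser `G₀` of `m₀`. -/
structure CellSpace (G M : Type*) [Group G] where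
  act : G → M → M
  one_act : ∀ m : M, act 1 m = m
  mul_act : ∀ (g h : G) (m : M), act (g * h) m = act g (act h m)
  transitive : ∀ m m' : M, ∃ g : G, act g m = m'
  m0 : M
  coord : M → G
  coord_act : ∀ m : M, act (coord m) m0 = m
  stab_finite : {g : G | act g m0 = m0}.Finite

variable [Group G]

namespace CellSpace

/-- Membership in the stabiliser `G₀` of `m₀`. -/
def stab (R : CellSpace G M) (g : G) : Prop := R.act g R.m0 = R.m0

/-- The induced right semi-action `m ↝ gG₀ = g_{m₀,m} g ▷ m₀`, on representatives. -/
def sAct (R : CellSpace G M) (m : M) (g : G) : M := R.act (R.coord m * g) R.m0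

/-- `m ↝ ι n` where `ι : M → G/G₀`, `n ↦ G_{m₀,n}` is the canonical identification. -/
def nAct (R : CellSpace G M) (m n : M) : M := R.act (R.coord m * R.coord n) R.m0

/-- `S ⊆ G` represents a finite symmetric right generating set of cosets
(`G₀ · S ⊆ S`, `S⁻¹ ⊆ S`, and `S` generates). -/
structure IsRightGenSet (R : CellSpace G M) (S : Set G) : Prop where
  finite : S.Finite
  saturated : ∀ s ∈ S, ∀ g₀ : G, R.stab g₀ → s * g₀ ∈ S
  stab_mul : ∀ g₀ : G, R.stab g₀ → ∀ s ∈ S, g₀ * s ∈ S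
  symm : ∀ s ∈ S, s⁻¹ ∈ S
  generates : ∀ m : M, ∃ (k : ℕ) (f : ℕ → M), f 0 = R.m0 ∧ f k = m ∧
    ∀ i < k, ∃ s ∈ S, f (i + 1) = R.sAct (f i) s

/-- There is an `S`-path of length `n` from `m` to `m'` in the `S`-Cayley graph. -/
def Chain (R : CellSpace G M) (S : Set G) (m m' : M) (n : ℕ) : Prop :=
  ∃ f : ℕ → M, f 0 = m ∧ f n = m' ∧ ∀ i < n, ∃ s ∈ S, f (i + 1) = R.sAct (f i) s

/-- The `S`-metric `d`. -/
noncomputable def dist (R : CellSpace G M) (S : Set G) (m m' : M) : ℕ :=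
  sInf {n : ℕ | R.Chain S m m' n}

/-- The ball `B(m, ρ)` of radius `ρ` centred at `m`. -/
noncomputable def ball (R : CellSpace G M) (S : Set G) (m : M) (ρ : ℕ) : Set M :=
  {m' : M | R.dist S m m' ≤ ρ}

/-- The `θ`-interior `A^{-θ}` of `A`. -/
noncomputable def inter (R : CellSpace G M) (S : Set G) (A : Set M) (θ : ℕ) : Set M :=
  {m ∈ A | R.ball S m θ ⊆ A}

/-- The `θ`-closure `A^{+θ}` of `A`. -/
noncomputable def clos (R : CellSpace G M) (S : Set G) (A : Set M) (θ : ℕ) : Set M :=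
  {m : M | (R.ball S m θ ∩ A).Nonempty}

/-- The external `θ`-boundary `∂θ⁺A = A^{+θ} ∖ A`. -/
noncomputable def extB (R : CellSpace G M) (S : Set G) (A : Set M) (θ : ℕ) : Set M :=
  R.clos S A θ \ A

/-- The internal `θ`-boundary `∂θ⁻A = A ∖ A^{-θ}`. -/
noncomputable def intB (R : CellSpace G M) (S : Set G) (A : Set M) (θ : ℕ) : Set M :=
  A \ R.inter S A θ

/-- The `θ`-boundary `∂θA = A^{+θ} ∖ A^{-θ}`. -/
noncomputable def bdry (R : CellSpace G M) (S : Set G) (A : Set M) (θ : ℕ) : Set M :=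
  R.clos S A θ \ R.inter S A θ

end CellSpace

/-- The set `X_A` of restrictions to `A` of the elements of `X`. -/
def restr (A : Set M) (X : Set (M → Q)) : Set (A → Q) :=
  (fun x : M → Q => A.restrict x) '' X

/-- The pattern `p` (with domain `A`) semi-occurs in the configuration `c`:
there is `h ∈ H` with `h ⊛ p = c↾_{h ▷ dom p}`. -/
def SemiOccurs (R : CellSpace G M) (H : Subgroup G) {A : Set M} (p : A → Q)
    (c : M → Q) : Prop :=
  ∃ h ∈ H, ∀ a : A, c (R.act h ↑a) = p a

/-- The pattern `p` (with domain `A`) occurs at `t` in the configuration `c`: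
`t ⊛' p = c↾_{t ↝ A}`. -/
def OccursAt (R : CellSpace G M) {A : Set M} (p : A → Q) (t : M) (c : M → Q) : Prop :=
  ∀ a : A, c (R.nAct t ↑a) = p a

/-- The pattern `p` is allowed in `X`: it semi-occurs in some point of `X`. -/
def Allowed (R : CellSpace G M) (H : Subgroup G) (X : Set (M → Q)) {A : Set M}
    (p : A → Q) : Prop :=
  ∃ x ∈ X, SemiOccurs R H p x

/-- The set `⟨𝔉⟩` generated by a set `𝔉` of forbidden patterns. -/
def Generated (R : CellSpace G M) (H : Subgroup G) (𝔉 : Set (Σ A : Set M, A → Q)) :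
    Set (M → Q) :=
  {c : M → Q | ∀ f ∈ 𝔉, ¬ SemiOccurs R H f.2 c}

/-- `X` is a subshift of `Q^M`: it is generated by a set of blocks. -/
def IsSubshift (R : CellSpace G M) (H : Subgroup G) (X : Set (M → Q)) : Prop :=
  ∃ 𝔉 : Set (Σ A : Set M, A → Q), (∀ f ∈ 𝔉, f.1.Finite) ∧ X = Generated R H 𝔉

/-- `X` is a subshift of finite type: it is generated by a finite set of blocks. -/
def IsSubshiftFT (R : CellSpace G M) (H : Subgroup G) (X : Set (M → Q)) : Prop :=
  ∃ 𝔉 : Set (Σ A : Set M, A → Q), 𝔉.Finite ∧ (∀ f ∈ 𝔉, f.1.Finite) ∧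
    X = Generated R H 𝔉

/-- `X` is a `κ`-step subshift: it is generated by a set of `B(κ)`-blocks. -/
def IsStep (R : CellSpace G M) (S : Set G) (H : Subgroup G) (X : Set (M → Q))
    (κ : ℕ) : Prop :=
  ∃ 𝔉 : Set (Σ A : Set M, A → Q), (∀ f ∈ 𝔉, f.1 = R.ball S R.m0 κ) ∧
    X = Generated R H 𝔉

/-- `X` is `κ`-strongly irreducible. -/
def IsStronglyIrr (R : CellSpace G M) (S : Set G) (H : Subgroup G)
    (X : Set (M → Q)) (κ : ℕ) : Prop :=
  ∀ (A B : Set M), A.Finite → B.Finite → ∀ (p : A → Q) (p' : B → Q),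
    Allowed R H X p → Allowed R H X p' →
    (∀ a ∈ A, ∀ b ∈ B, κ + 1 ≤ R.dist S a b) →
    ∃ x ∈ X, A.restrict x = p ∧ B.restrict x = p'

/-- `X` has `ρ`-bounded propagation. -/
def HasBoundedProp (R : CellSpace G M) (S : Set G) (X : Set (M → Q)) (ρ : ℕ) : Prop :=
  ∀ F : Set M, F.Finite → ∀ p : F → Q,
    (∀ f ∈ F, ∃ x ∈ X, ∀ (m : M) (hm : m ∈ R.ball S f ρ ∩ F), p ⟨m, hm.2⟩ = x m) →
    ∃ x ∈ X, F.restrict x = p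

/-- `Δ` is a `κ`-local map from `X` to `Y`. -/
def IsLocalMap (R : CellSpace G M) (S : Set G) (H : Subgroup G)
    (X Y : Set (M → Q)) (Δ : (M → Q) → (M → Q)) (κ : ℕ) : Prop :=
  Set.MapsTo Δ X Y ∧
  ∃ N : Set M, N ⊆ R.ball S R.m0 κ ∧
    (∀ g₀ : G, R.stab g₀ → ∀ n ∈ N, R.act g₀ n ∈ N) ∧
    ∃ δ : (N → Q) → Q,
      (∀ h₀ ∈ H, R.stab h₀ →
        ∀ ℓ ∈ restr N X, ∀ ℓ' : N → Q,
          (∀ (n : M) (hn : n ∈ N) (hn' : R.act h₀⁻¹ n ∈ N),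
            ℓ' ⟨n, hn⟩ = ℓ ⟨R.act h₀⁻¹ n, hn'⟩) →
          δ ℓ' = δ ℓ) ∧
      ∀ x ∈ X, ∀ m : M, Δ x m = δ (fun n : N => x (R.nAct m ↑n))

/-- `Δ` is pre-injective on `X`. -/
def PreInjective (X : Set (M → Q)) (Δ : (M → Q) → (M → Q)) : Prop :=
  ∀ x ∈ X, ∀ x' ∈ X, Δ x = Δ x' → {m : M | x m ≠ x' m}.Finite → x = x'

/-- The cell space `R` is right amenable: there is a finitely additive probability
measure on the power set of `M` that is semi-invariant under the right semi-action. -/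
def RightAmenable (R : CellSpace G M) : Prop :=
  ∃ μ : Set M → ℝ, (∀ A : Set M, 0 ≤ μ A) ∧ μ Set.univ = 1 ∧
    (∀ A B : Set M, Disjoint A B → μ (A ∪ B) = μ A + μ B) ∧
    ∀ (g : G) (A : Set M), Set.InjOn (fun m => R.sAct m g) A →
      μ ((fun m => R.sAct m g) '' A) = μ A

/-- `F` is a right Følner net in `R` (indexed by the directed set `I`). -/
def IsFolnerNet (R : CellSpace G M) (S : Set G) {I : Type*} [Preorder I]
    (F : I → Set M) : Prop :=
  (∀ i, (F i).Nonempty) ∧ (∀ i, (F i).Finite) ∧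
  ∀ ρ : ℕ, Tendsto (fun i => ((R.bdry S (F i) ρ).ncard : ℝ) / ((F i).ncard : ℝ))
    atTop (nhds 0)

/-- The entropy of `X ⊆ Q^M` with respect to the net `F`:
`limsup_i log|X_{F_i}| / |F_i|`. -/
noncomputable def entropy (R : CellSpace G M) (S : Set G) {I : Type*} [Preorder I]
    (F : I → Set M) (X : Set (M → Q)) : ℝ :=
  limsup (fun i => Real.log ((restr (F i) X).ncard : ℝ) / ((F i).ncard : ℝ)) atTop

/-- `T` is a `⟨θ, κ, θ'⟩`-tiling of `R`. -/
def IsTiling (R : CellSpace G M) (S : Set G) (θ κ θ' : ℕ) (T : Set M) : Prop :=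
  (∀ t ∈ T, ∀ t' ∈ T, t ≠ t' →
    ∀ a ∈ R.ball S t θ, ∀ b ∈ R.ball S t' θ, κ + 1 ≤ R.dist S a b) ∧
  ∀ m : M, ∃ t ∈ T, m ∈ R.ball S t θ'

/-- The action `h ⊛ c` of `h ∈ G` on configurations: `(h ⊛ c)(m) = c(h⁻¹ ▷ m)`. -/
def shiftAct (R : CellSpace G M) (h : G) (c : M → Q) : M → Q :=
  fun m => c (R.act h⁻¹ m)

/-!
Take `x' = y` on `A` and `x' = x` off `A`, where `x, y ∈ X` extend `p, p'`. A translate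
`h ▷ B(κ)` of a forbidden block has diameter at most `2κ`, so if it meets `A` it lies in
`A^{+2κ}`, where `x'` agrees with `y` (on `∂⁺_{2κ}A` because `x` and `y` agree there);
otherwise it lies in `M ∖ A`, where `x'` agrees with `x`. Either way no forbidden block
semi-occurs in `x'`.
-/

namespace CellSpace

variable (R : CellSpace G M) {S : Set G}

lemma act_inv_act (g : G) (m : M) : R.act g⁻¹ (R.act g m) = m := by
  rw [← R.mul_act, inv_mul_cancel, R.one_act]

lemma stab_inv {g : G} (h : R.stab g) : R.stab g⁻¹ := by
  have h' := R.act_inv_act g R.m0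
  unfold stab at *
  rwa [h] at h'

lemma act_coord_inv (m : M) : R.act (R.coord m)⁻¹ m = R.m0 := by
  simpa only [R.coord_act] using R.act_inv_act (R.coord m) R.m0

lemma exists_act_sAct_eq_sAct_act (hS : R.IsRightGenSet S) (g : G) (m : M) {s : G}
    (hs : s ∈ S) : ∃ s' ∈ S, R.act g (R.sAct m s) = R.sAct (R.act g m) s' := by
  set g₀ := (R.coord (R.act g m))⁻¹ * (g * R.coord m) with hg₀_def
  have hg₀ : R.stab g₀ := by
    unfold stab
    rw [R.mul_act, R.mul_act, R.coord_act]
    exact R.act_coord_inv (R.act g m)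
  refine ⟨g₀ * s, hS.stab_mul g₀ hg₀ s hs, ?_⟩
  have he : R.coord (R.act g m) * (g₀ * s) = g * (R.coord m * s) := by rw [hg₀_def]; group
  rw [sAct, sAct, he]
  exact (R.mul_act _ _ _).symm

lemma exists_sAct_sAct_eq (hS : R.IsRightGenSet S) (m : M) {s : G} (hs : s ∈ S) :
    ∃ s' ∈ S, R.sAct (R.sAct m s) s' = m := by
  set g₀ := (R.coord m * s)⁻¹ * R.coord (R.sAct m s) with hg₀_def
  have hg₀ : R.stab g₀ := by
    unfold stab
    rw [R.mul_act, R.coord_act]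
    exact R.act_inv_act _ _
  refine ⟨g₀⁻¹ * s⁻¹, hS.stab_mul g₀⁻¹ (R.stab_inv hg₀) s⁻¹ (hS.symm s hs), ?_⟩
  have he : R.coord (R.sAct m s) * (g₀⁻¹ * s⁻¹) = R.coord m := by rw [hg₀_def]; group
  rw [sAct, he, R.coord_act]

variable {R}

lemma Chain.act (hS : R.IsRightGenSet S) (g : G) {m m' : M} {n : ℕ}
    (h : R.Chain S m m' n) : R.Chain S (R.act g m) (R.act g m') n := by
  obtain ⟨f, hf0, hfn, hstep⟩ := h
  refine ⟨fun i => R.act g (f i), congrArg _ hf0, congrArg _ hfn, fun i hi => ?_⟩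
  obtain ⟨s, hs, he⟩ := hstep i hi
  obtain ⟨s', hs', he'⟩ := R.exists_act_sAct_eq_sAct_act hS g (f i) hs
  exact ⟨s', hs', by simp only [he, he']⟩

lemma Chain.symm (hS : R.IsRightGenSet S) {m m' : M} {n : ℕ}
    (h : R.Chain S m m' n) : R.Chain S m' m n := by
  obtain ⟨f, hf0, hfn, hstep⟩ := h
  refine ⟨fun i => f (n - i), by simpa using hfn, by simpa using hf0, fun i hi => ?_⟩
  obtain ⟨s, hs, he⟩ := hstep (n - (i + 1)) (by omega)
  obtain ⟨s', hs', he'⟩ := R.exists_sAct_sAct_eq hS (f (n - (i + 1))) hs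
  refine ⟨s', hs', ?_⟩
  have hidx : n - (i + 1) + 1 = n - i := by omega
  simp only [← hidx, he, he']

lemma Chain.trans {m m' m'' : M} {n k : ℕ} (h₁ : R.Chain S m m' n)
    (h₂ : R.Chain S m' m'' k) : R.Chain S m m'' (n + k) := by
  obtain ⟨f, hf0, hfn, hfstep⟩ := h₁
  obtain ⟨g, hg0, hgk, hgstep⟩ := h₂
  set F : ℕ → M := fun i => if i ≤ n then f i else g (i - n)
  have hF_low : ∀ i ≤ n, F i = f i := fun i hi => if_pos hi
  have hF_high : ∀ i, n ≤ i → F i = g (i - n) := by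
    intro i hi
    rcases hi.eq_or_lt with rfl | hlt
    · rw [hF_low n le_rfl, hfn, Nat.sub_self, hg0]
    · exact if_neg (by omega)
  refine ⟨F, by rw [hF_low 0 (Nat.zero_le n), hf0], ?_, fun i hi => ?_⟩
  · rw [hF_high (n + k) (by omega), Nat.add_sub_cancel_left, hgk]
  · by_cases hin : i < n
    · rw [hF_low (i + 1) hin, hF_low i hin.le]
      exact hfstep i hin
    · have hidx : i + 1 - n = i - n + 1 := by omega
      rw [hF_high (i + 1) (by omega), hF_high i (by omega), hidx]
      exact hgstep (i - n) (by omega)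

lemma exists_chain (hS : R.IsRightGenSet S) (m m' : M) : ∃ n, R.Chain S m m' n := by
  obtain ⟨k, f, hf0, hfk, hstep⟩ := hS.generates m
  obtain ⟨k', f', hf0', hfk', hstep'⟩ := hS.generates m'
  exact ⟨k + k', (Chain.symm hS ⟨f, hf0, hfk, hstep⟩).trans ⟨f', hf0', hfk', hstep'⟩⟩

lemma chain_dist (hS : R.IsRightGenSet S) (m m' : M) : R.Chain S m m' (R.dist S m m') :=
  Nat.sInf_mem (exists_chain hS m m')

lemma dist_le_of_chain {m m' : M} {n : ℕ} (h : R.Chain S m m' n) : R.dist S m m' ≤ n :=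
  Nat.sInf_le h

lemma dist_comm (hS : R.IsRightGenSet S) (m m' : M) : R.dist S m m' = R.dist S m' m :=
  le_antisymm (dist_le_of_chain ((chain_dist hS m' m).symm hS))
    (dist_le_of_chain ((chain_dist hS m m').symm hS))

lemma dist_triangle (hS : R.IsRightGenSet S) (m m' m'' : M) :
    R.dist S m m'' ≤ R.dist S m m' + R.dist S m' m'' :=
  dist_le_of_chain ((chain_dist hS m m').trans (chain_dist hS m' m''))

lemma dist_act_le (hS : R.IsRightGenSet S) (g : G) (m m' : M) :
    R.dist S (R.act g m) (R.act g m') ≤ R.dist S m m' :=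
  dist_le_of_chain ((chain_dist hS m m').act hS g)

lemma dist_act_le_of_mem_ball (hS : R.IsRightGenSet S) (g : G) {c b b' : M} {ρ ρ' : ℕ}
    (hb : b ∈ R.ball S c ρ) (hb' : b' ∈ R.ball S c ρ') :
    R.dist S (R.act g b) (R.act g b') ≤ ρ + ρ' :=
  calc R.dist S (R.act g b) (R.act g b') ≤ R.dist S b b' := dist_act_le hS g b b'
    _ ≤ R.dist S b c + R.dist S c b' := dist_triangle hS b c b'
    _ = R.dist S c b + R.dist S c b' := by rw [dist_comm hS b c]
    _ ≤ ρ + ρ' := add_le_add hb hb'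

end CellSpace

theorem piecewise_mem_of_isStep {R : CellSpace G M} {S : Set G} (hS : R.IsRightGenSet S)
    {H : Subgroup G} {X : Set (M → Q)} {κ : ℕ} (hX : IsStep R S H X κ) {A : Set M}
    [DecidablePred (· ∈ A)] {x y : M → Q} (hx : x ∈ X) (hy : y ∈ X)
    (hxy : ∀ m ∈ R.extB S A (2 * κ), x m = y m) : A.piecewise y x ∈ X := by
  obtain ⟨𝔉, hdom, rfl⟩ := hX
  rintro f hf ⟨h, hhH, hocc⟩
  by_cases hmeet : ∃ a : f.1, R.act h a ∈ A
  · obtain ⟨a₀, ha₀⟩ := hmeet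
    refine hy f hf ⟨h, hhH, fun a => ?_⟩
    rw [← hocc a]
    by_cases ha : R.act h a ∈ A
    · rw [Set.piecewise_eq_of_mem _ _ _ ha]
    · have hball : ∀ b : f.1, (b : M) ∈ R.ball S R.m0 κ := fun b => hdom f hf ▸ b.2
      have hclos : R.act h a ∈ R.clos S A (2 * κ) :=
        ⟨R.act h a₀, (CellSpace.dist_act_le_of_mem_ball hS h (hball a) (hball a₀)).trans
          (two_mul κ).ge, ha₀⟩
      rw [Set.piecewise_eq_of_notMem _ _ _ ha]
      exact (hxy _ ⟨hclos, ha⟩).symm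
  · push Not at hmeet
    refine hx f hf ⟨h, hhH, fun a => ?_⟩
    rw [← hocc a, Set.piecewise_eq_of_notMem _ _ _ (hmeet a)]

theorem stmt5_general
    (R : CellSpace G M) (S : Set G) (hS : R.IsRightGenSet S)
    (H : Subgroup G)
    (X : Set (M → Q)) (κ : ℕ) (hstep : IsStep R S H X κ)
    (A : Set M) (p p' : (R.clos S A (2 * κ) : Set M) → Q)
    (hp : p ∈ restr (R.clos S A (2 * κ)) X)
    (hp' : p' ∈ restr (R.clos S A (2 * κ)) X)
    (hagree : ∀ (m : M) (hm : m ∈ R.clos S A (2 * κ)), m ∉ A →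
      p ⟨m, hm⟩ = p' ⟨m, hm⟩) :
    ∃ x ∈ X, ∃ x' ∈ X,
      Set.restrict (R.clos S A (2 * κ)) x = p ∧
      Set.restrict (R.clos S A (2 * κ)) x' = p' ∧
      ∀ m : M, m ∉ A → x m = x' m := by
  classical
  obtain ⟨x, hx, rfl⟩ := hp
  obtain ⟨y, hy, rfl⟩ := hp'
  have hxy : ∀ m ∈ R.extB S A (2 * κ), x m = y m := fun m hm => hagree m hm.1 hm.2
  refine ⟨x, hx, A.piecewise y x, piecewise_mem_of_isStep hS hstep hx hy hxy, rfl, ?_,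
    fun m hm => (Set.piecewise_eq_of_notMem _ _ _ hm).symm⟩
  funext ⟨m, hm⟩
  by_cases hmA : m ∈ A
  · exact Set.piecewise_eq_of_mem _ _ _ hmA
  · exact (Set.piecewise_eq_of_notMem _ _ _ hmA).trans (hxy m ⟨hm, hmA⟩)

theorem stmt5
    [Finite Q] (R : CellSpace G M) (S : Set G) (hS : R.IsRightGenSet S)
    (H : Subgroup G) (hH : ∀ m : M, R.coord m ∈ H)
    (X : Set (M → Q)) (κ : ℕ) (hX : IsSubshift R H X) (hstep : IsStep R S H X κ)
    (A : Set M) (p p' : (R.clos S A (2 * κ) : Set M) → Q)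
    (hp : p ∈ restr (R.clos S A (2 * κ)) X)
    (hp' : p' ∈ restr (R.clos S A (2 * κ)) X)
    (hagree : ∀ (m : M) (hm : m ∈ R.clos S A (2 * κ)), m ∉ A →
      p ⟨m, hm⟩ = p' ⟨m, hm⟩) :
    ∃ x ∈ X, ∃ x' ∈ X,
      Set.restrict (R.clos S A (2 * κ)) x = p ∧
      Set.restrict (R.clos S A (2 * κ)) x' = p' ∧
      ∀ m : M, m ∉ A → x m = x' m :=
  stmt5_general R S hS H X κ hstep A p p' hp hp' hagree

end GoE
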